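/- Let V be an n-dimensional linear subspace of ℝ^d, Π the orthogonal projection onto V, and F : V → V^⊥ an L-Lipschitz function with L ≤ 1/4; let Γ = { x + F(x) : x ∈ V } be its graph. Let φ : ℝ^d → ℝ be a radial C^∞ function with φ ≡ 1 on B(0,1/2) and supp φ ⊂ B(0,1); for r > 0 set φ_r(x) = r^{-n} φ(x/r), ψ_r = φ_r − φ_{2r}, and ψ̃_r(x) = ψ_r(Π(x)) · φ(x/(5r)). Then for all x, y ∈ Γ and all r > 0, ψ̃_r(x − y) = ψ_r(Π(x) − Π(y)); consequently, for every finite Borel measure ν supported on Γ and every x ∈ Γ, ∫ ψ̃_r(x − y) dν(y) = (ψ_r * Π_*ν)(Π(x)), where Π_*ν is the image measure of ν under Π and the convolution is taken on V. -/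

import Mathlib

open MeasureTheory Metric Set

noncomputable section

abbrev Euc (d : ℕ) : Type := EuclideanSpace ℝ (Fin d)

/-- The orthogonal projection onto a subspace `V ⊆ ℝ^d`, viewed as a map `ℝ^d → ℝ^d`. -/
noncomputable def proj {d : ℕ} (V : Submodule ℝ (Euc d)) (x : Euc d) : Euc d :=
  (V.orthogonalProjection x : Euc d)

/-- `φ_r(x) = r^{-n} φ(x/r)`. -/
noncomputable def phiR {d : ℕ} (n : ℕ) (φ : Euc d → ℝ) (r : ℝ) (x : Euc d) : ℝ :=
  (r ^ n)⁻¹ * φ (r⁻¹ • x)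

/-- `ψ_r = φ_r − φ_{2r}`. -/
noncomputable def psiR {d : ℕ} (n : ℕ) (φ : Euc d → ℝ) (r : ℝ) (x : Euc d) : ℝ :=
  phiR n φ r x - phiR n φ (2 * r) x

/-- `ψ̃_r(x) = ψ_r(Π(x)) · φ(x/(5r))`. -/
noncomputable def psiTilde {d : ℕ} (n : ℕ) (V : Submodule ℝ (Euc d)) (φ : Euc d → ℝ)
    (r : ℝ) (x : Euc d) : ℝ :=
  psiR n φ r (proj V x) * φ ((5 * r)⁻¹ • x)

lemma proj_graph {d : ℕ} (V : Submodule ℝ (Euc d)) (v : V) (w : Vᗮ) :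
    proj V ((v : Euc d) + (w : Euc d)) = v := by
  simp [proj, map_add, Submodule.orthogonalProjectionOnto_mem_subspace_eq_self,
    Submodule.orthogonalProjectionOnto_apply_of_mem_orthogonal w.2]

lemma proj_sub {d : ℕ} (V : Submodule ℝ (Euc d)) (a b : Euc d) :
    proj V (a - b) = proj V a - proj V b := by
  simp [proj, map_sub]

lemma proj_cont {d : ℕ} (V : Submodule ℝ (Euc d)) : Continuous (proj V) :=
  continuous_subtype_val.comp (V.orthogonalProjection).continuous

lemma phi_eq_zero {d : ℕ} (φ : Euc d → ℝ)
    (hsupp : Function.support φ ⊆ ball (0 : Euc d) 1) (u : Euc d) (hu : 1 ≤ ‖u‖) :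
    φ u = 0 := by
  by_contra h
  have := hsupp h
  rw [mem_ball, dist_zero_right] at this
  linarith

lemma psiR_eq_zero {d : ℕ} (n : ℕ) (φ : Euc d → ℝ)
    (hsupp : Function.support φ ⊆ ball (0 : Euc d) 1) (r : ℝ) (hr : 0 < r)
    (z : Euc d) (hz : 2 * r ≤ ‖z‖) : psiR n φ r z = 0 := by
  have h2r : (0:ℝ) < 2 * r := by linarith
  have h1 : φ (r⁻¹ • z) = 0 := by
    apply phi_eq_zero φ hsupp
    rw [norm_smul, norm_inv, Real.norm_eq_abs, abs_of_pos hr, le_inv_mul_iff₀ hr]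
    linarith
  have h2 : φ ((2 * r)⁻¹ • z) = 0 := by
    apply phi_eq_zero φ hsupp
    rw [norm_smul, norm_inv, Real.norm_eq_abs, abs_of_pos h2r, le_inv_mul_iff₀ h2r]
    linarith
  unfold psiR phiR
  rw [h1, h2]
  ring

lemma psiR_cont {d : ℕ} (n : ℕ) (φ : Euc d → ℝ) (hφ : Continuous φ) (r : ℝ) (c : Euc d) :
    Continuous (fun w : Euc d => psiR n φ r (c - w)) := by
  unfold psiR phiR
  fun_prop

/-- For a graph `Γ` of an `L`-Lipschitz map `F : V → V^⊥` with
`L ≤ 1/4`, and a radial smooth bump `φ` (`φ ≡ 1` on `B(0,1/2)`, `supp φ ⊆ B(0,1)`),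
one has `ψ̃_r(x−y) = ψ_r(Π x − Π y)` for `x, y ∈ Γ`, and hence
`∫ ψ̃_r(x−y) dν(y) = (ψ_r * Π_*ν)(Π x)` for finite Borel measures `ν` on `Γ`. -/
theorem statement15 (n d : ℕ) (V : Submodule ℝ (Euc d))
    (hV : Module.finrank ℝ V = n)
    (F : V → (Vᗮ : Submodule ℝ (Euc d))) (L : NNReal) (hL : (L : ℝ) ≤ 1 / 4)
    (hF : LipschitzWith L F)
    (Γ : Set (Euc d)) (hΓ : Γ = { y | ∃ x : V, y = (x : Euc d) + (F x : Euc d) })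
    (φ : Euc d → ℝ)
    (hrad : ∃ g : ℝ → ℝ, ∀ x, φ x = g ‖x‖)
    (hsmooth : ContDiff ℝ (⊤ : ℕ∞) φ)
    (h1 : ∀ x ∈ ball (0 : Euc d) (1 / 2), φ x = 1)
    (hsupp : Function.support φ ⊆ ball (0 : Euc d) 1) :
    (∀ x ∈ Γ, ∀ y ∈ Γ, ∀ r : ℝ, 0 < r →
        psiTilde n V φ r (x - y) = psiR n φ r (proj V x - proj V y)) ∧
    ∀ ν : Measure (Euc d), IsFiniteMeasure ν → ν Γᶜ = 0 →
      ∀ x ∈ Γ, ∀ r : ℝ, 0 < r →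
        (∫ y, psiTilde n V φ r (x - y) ∂ν) =
          ∫ w, psiR n φ r (proj V x - w) ∂(ν.map (proj V)) := by
  have key : ∀ x ∈ Γ, ∀ y ∈ Γ, ∀ r : ℝ, 0 < r →
      psiTilde n V φ r (x - y) = psiR n φ r (proj V x - proj V y) := by
    intro x hx y hy r hr
    rw [hΓ] at hx hy
    obtain ⟨x', hx'⟩ := hx
    obtain ⟨y', hy'⟩ := hy
    have hpx : proj V x = (x' : Euc d) := by rw [hx']; exact proj_graph V x' (F x')
    have hpy : proj V y = (y' : Euc d) := by rw [hy']; exact proj_graph V y' (F y')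
    rw [psiTilde, proj_sub]
    by_cases hz : psiR n φ r (proj V x - proj V y) = 0
    · rw [hz, zero_mul]
    · have hlt : ‖proj V x - proj V y‖ < 2 * r := by
        by_contra h
        exact hz (psiR_eq_zero n φ hsupp r hr _ (le_of_not_gt h))
      have hFxy : ‖(F x' : Euc d) - (F y' : Euc d)‖ ≤ L * ‖(x' : Euc d) - (y' : Euc d)‖ := by
        have := hF.dist_le_mul x' y'
        rw [Subtype.dist_eq, Subtype.dist_eq] at this
        simpa [dist_eq_norm] using this
      have hnorm : ‖x - y‖ < 5 * r / 2 := by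
        have hxy : x - y = ((x' : Euc d) - (y' : Euc d)) + ((F x' : Euc d) - (F y' : Euc d)) := by
          rw [hx', hy']; abel
        rw [hpx, hpy] at hlt
        calc ‖x - y‖ ≤ ‖(x' : Euc d) - (y' : Euc d)‖ + ‖(F x' : Euc d) - (F y' : Euc d)‖ := by
              rw [hxy]; exact norm_add_le _ _
          _ ≤ (1 + L) * ‖(x' : Euc d) - (y' : Euc d)‖ := by rw [add_mul, one_mul]; linarith
          _ < 5 * r / 2 := by nlinarith [norm_nonneg ((x' : Euc d) - (y' : Euc d)), L.coe_nonneg]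
      have hφ1 : φ ((5 * r)⁻¹ • (x - y)) = 1 := by
        apply h1
        rw [mem_ball, dist_zero_right, norm_smul, norm_inv, Real.norm_eq_abs,
          abs_of_pos (by linarith : (0:ℝ) < 5 * r)]
        rw [inv_mul_lt_iff₀ (by linarith : (0:ℝ) < 5 * r)]
        linarith
      rw [hφ1, mul_one]
  refine ⟨key, ?_⟩
  intro ν _ hν x hx r hr
  have hae : ∀ᵐ y ∂ν, psiTilde n V φ r (x - y) = psiR n φ r (proj V x - proj V y) := by
    have hsub : {y | ¬ psiTilde n V φ r (x - y) = psiR n φ r (proj V x - proj V y)} ⊆ Γᶜ := by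
      intro y hy hyΓ
      exact hy (key x hx y hyΓ r hr)
    exact measure_mono_null hsub hν
  rw [integral_congr_ae hae]
  rw [integral_map ((proj_cont V).aemeasurable)
    ((psiR_cont n φ hsmooth.continuous r (proj V x)).aestronglyMeasurable)]

end
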